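/- arXiv:1512.02894 — 4 statements merged into one kernel-verified Lean document; each statement's English description precedes it below -/
import Mathlib

section
/- Let b > 0, c(x,y) = min(x, b·y), and let s ∈ ℝ satisfy μ((-∞,s)) = ν((s/b,+∞)). Suppose π is a coupling of atomless probability measures μ, ν on ℝ whose support contains a point (x₁,y₁) with x₁ < s and y₁ < s/b. Then the support of π also contains a point (x₂,y₂) with x₂ > s and y₂ > s/b, and consequently supp(π) is not c-cyclically monotone. -/
open MeasureTheory Finset

/-- The topological support of a measure on `ℝ × ℝ`: points all of whose open
neighbourhoods have positive measure. -/
def msupport (π : Measure (ℝ × ℝ)) : Set (ℝ × ℝ) :=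
  {p | ∀ U : Set (ℝ × ℝ), IsOpen U → p ∈ U → 0 < π U}

/-- `π` is a coupling of `μ` and `ν`. -/
def IsCoupling (π : Measure (ℝ × ℝ)) (μ ν : Measure ℝ) : Prop :=
  IsProbabilityMeasure π ∧ π.map Prod.fst = μ ∧ π.map Prod.snd = ν

/-- `c`-cyclical monotonicity of a set. -/
def CCyclicallyMonotone (c : ℝ → ℝ → ℝ) (S : Set (ℝ × ℝ)) : Prop :=
  ∀ (n : ℕ) (p : Fin (n + 1) → ℝ × ℝ), (∀ i, p i ∈ S) →
    ∑ i : Fin (n + 1), c (p i).1 (p i).2 ≤ ∑ i : Fin (n + 1), c (p i).1 (p (i - 1)).2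

/-!
Since `μ` has no atoms, `π(x ≤ s) = μ(-∞, s) = ν(s/b, ∞) = π(y > s/b)`; removing the common part
`π(x ≤ s, y > s/b)` from both sides shows that the closed lower-left quadrant at `(s, s/b)` and
the open upper-right one carry the same mass. The support point `(x₁, y₁)` gives the former
positive mass, so the latter meets the support in some `(x₂, y₂)`. Swapping the second
coordinates of these two points strictly lowers the total cost of `c(x, y) = min x (b y)`, since
`max x₁ (b y₁) < s < min x₂ (b y₂)`.
-/

theorem msupport_eq_support (π : Measure (ℝ × ℝ)) : msupport π = π.support := by
  rw [Measure.support_eq_forall_isOpen]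
  ext p
  exact forall_congr' fun U => forall_comm

theorem measure_prod_compl_eq_of_measure_preimage_eq {α β : Type*} [MeasurableSpace α]
    [MeasurableSpace β] (π : Measure (α × β)) [IsFiniteMeasure π] {A : Set α} {B : Set β}
    (hA : MeasurableSet A) (hB : MeasurableSet B)
    (h : π (Prod.fst ⁻¹' A) = π (Prod.snd ⁻¹' B)) :
    π (A ×ˢ Bᶜ) = π (Aᶜ ×ˢ B) := by
  have hfst : π (A ×ˢ B) + π (A ×ˢ Bᶜ) = π (Prod.fst ⁻¹' A) :=
    measure_inter_add_sdiff (Prod.fst ⁻¹' A) (measurable_snd hB)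
  have hsnd : π (A ×ˢ B) + π (Aᶜ ×ˢ B) = π (Prod.snd ⁻¹' B) := by
    convert measure_inter_add_sdiff (μ := π) (Prod.snd ⁻¹' B) (measurable_fst hA) using 3 <;>
      ext <;> simp [and_comm]
  exact (ENNReal.add_right_inj (measure_ne_top π _)).1 (hfst.trans (h.trans hsnd.symm))

theorem CCyclicallyMonotone.add_le_add_swap {c : ℝ → ℝ → ℝ} {S : Set (ℝ × ℝ)}
    (hS : CCyclicallyMonotone c S) {p q : ℝ × ℝ} (hp : p ∈ S) (hq : q ∈ S) :
    c p.1 p.2 + c q.1 q.2 ≤ c p.1 q.2 + c q.1 p.2 := by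
  have h := hS 1 ![p, q] (Fin.forall_fin_two.2 ⟨hp, hq⟩)
  simpa [Fin.sum_univ_two] using h

theorem min_add_min_lt_min_add_min {a₁ a₂ b₁ b₂ s : ℝ} (ha₁ : a₁ < s) (ha₂ : a₂ < s)
    (hb₁ : s < b₁) (hb₂ : s < b₂) :
    min a₁ b₂ + min b₁ a₂ < min a₁ a₂ + min b₁ b₂ := by
  rw [min_eq_left (ha₁.trans hb₂).le, min_eq_right (ha₂.trans hb₁).le]
  have hmax : max a₁ a₂ < min b₁ b₂ := (max_lt ha₁ ha₂).trans (lt_min hb₁ hb₂)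
  linarith [min_add_max a₁ a₂]

theorem stmt3_general (μ ν : Measure ℝ)
    [NullSingletonClass μ] (b s : ℝ) (hb : 0 < b)
    (hs : μ (Set.Iio s) = ν (Set.Ioi (s / b)))
    (π : Measure (ℝ × ℝ)) (hπ : IsCoupling π μ ν)
    (x₁ y₁ : ℝ) (hmem : (x₁, y₁) ∈ msupport π) (hx₁ : x₁ < s) (hy₁ : y₁ < s / b) :
    (∃ x₂ y₂ : ℝ, (x₂, y₂) ∈ msupport π ∧ s < x₂ ∧ s / b < y₂) ∧
      ¬ CCyclicallyMonotone (fun x y => min x (b * y)) (msupport π) := by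
  obtain ⟨hprob, rfl, rfl⟩ := hπ
  have hquadrants : π (Set.Iic s ×ˢ Set.Iic (s / b)) = π (Set.Ioi s ×ˢ Set.Ioi (s / b)) := by
    rw [← Set.compl_Ioi (a := s / b), ← Set.compl_Iic (a := s)]
    refine measure_prod_compl_eq_of_measure_preimage_eq π measurableSet_Iic measurableSet_Ioi ?_
    rwa [← Measure.map_apply measurable_fst measurableSet_Iic,
      ← Measure.map_apply measurable_snd measurableSet_Ioi, ← measure_congr Iio_ae_eq_Iic]
  have hpos : 0 < π (Set.Ioi s ×ˢ Set.Ioi (s / b)) :=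
    calc 0 < π (Set.Iio s ×ˢ Set.Iio (s / b)) := hmem _ (isOpen_Iio.prod isOpen_Iio) ⟨hx₁, hy₁⟩
      _ ≤ π (Set.Iic s ×ˢ Set.Iic (s / b)) :=
        measure_mono (Set.prod_mono Set.Iio_subset_Iic_self Set.Iio_subset_Iic_self)
      _ = _ := hquadrants
  obtain ⟨⟨x₂, y₂⟩, ⟨hx₂ : s < x₂, hy₂ : s / b < y₂⟩, hmem₂⟩ :=
    Measure.nonempty_inter_support_of_pos hpos
  rw [← msupport_eq_support] at hmem₂
  refine ⟨⟨x₂, y₂, hmem₂, hx₂, hy₂⟩, fun hcm => ?_⟩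
  have hswap := hcm.add_le_add_swap hmem hmem₂
  have hby₁ : b * y₁ < s := by rwa [lt_div_iff₀ hb, mul_comm] at hy₁
  have hby₂ : s < b * y₂ := by rwa [div_lt_iff₀ hb, mul_comm] at hy₂
  exact hswap.not_gt (min_add_min_lt_min_add_min hx₁ hby₁ hx₂ hby₂)

theorem stmt3 (μ ν : Measure ℝ) [IsProbabilityMeasure μ] [IsProbabilityMeasure ν]
    [NullSingletonClass μ] [NullSingletonClass ν] (b s : ℝ) (hb : 0 < b)
    (hs : μ (Set.Iio s) = ν (Set.Ioi (s / b)))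
    (π : Measure (ℝ × ℝ)) (hπ : IsCoupling π μ ν)
    (x₁ y₁ : ℝ) (hmem : (x₁, y₁) ∈ msupport π) (hx₁ : x₁ < s) (hy₁ : y₁ < s / b) :
    (∃ x₂ y₂ : ℝ, (x₂, y₂) ∈ msupport π ∧ s < x₂ ∧ s / b < y₂) ∧
      ¬ CCyclicallyMonotone (fun x y => min x (b * y)) (msupport π) :=
  stmt3_general μ ν b s hb hs π hπ x₁ y₁ hmem hx₁ hy₁
end

section
/- Let l₁,…,lₙ be affine functions lⱼ(x,y) = aⱼx + bⱼy + cⱼ and c = min(l₁,…,lₙ). For every (μ,ν)-partition 𝒫 = ({I_i},{J_i}) of order at most n, define J(𝒫) = Σᵢ minⱼ (aⱼ ∫_{I_i} x dμ + bⱼ ∫_{J_i} y dν + cⱼ μ(I_i)). Then J(𝒫) ≥ K(μ,ν), where K(μ,ν) = inf over π ∈ Π(μ,ν) of ∫ c dπ. -/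
/-!
For each `i`, let `π_i` be the product of `μ` restricted to `I_i` and `ν` restricted to `J_i`,
divided by the common mass `μ(I_i) = ν(J_i)`. Its marginals are these restrictions, so
`π = ∑ π_i` is a coupling of `μ` and `ν`. Since `c ≤ lⱼ`, the integral of `c` against `π_i` is
at most `minⱼ ∫ lⱼ dπ_i`, and by linearity `∫ lⱼ dπ_i` depends only on the marginals of `π_i`:
it is the `j`-th term of the `i`-th summand of `J(𝒫)`. Summing over `i` gives `∫ c dπ ≤ J(𝒫)`.
The infimum defining `K(μ,ν)` is a genuine one because `c(x,y) ≥ f(x) + g(y)` with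
`f ∈ L¹(μ)`, `g ∈ L¹(ν)`, which bounds `∫ c dπ'` below uniformly over couplings `π'`.
-/

open MeasureTheory Finset

/-- A `(μ,ν)`-partition of order `n`: partitions of the real line into `n`
disjoint nonempty connected (measurable) sets with matching positive masses. -/
structure MNPartition (μ ν : Measure ℝ) (n : ℕ) where
  I : Fin n → Set ℝ
  J : Fin n → Set ℝ
  hI_meas : ∀ i, MeasurableSet (I i)
  hJ_meas : ∀ i, MeasurableSet (J i)
  hI_conn : ∀ i, IsConnected (I i)
  hJ_conn : ∀ i, IsConnected (J i)
  hI_disj : Pairwise (Function.onFun Disjoint I)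
  hJ_disj : Pairwise (Function.onFun Disjoint J)
  hI_cover : (⋃ i, I i) = Set.univ
  hJ_cover : (⋃ i, J i) = Set.univ
  h_eq : ∀ i, μ (I i) = ν (J i)
  h_pos : ∀ i, 0 < μ (I i)

noncomputable def affFn (a b c : ℝ) : ℝ × ℝ → ℝ := fun p => a * p.1 + b * p.2 + c

noncomputable def minCost {n : ℕ} (a b c : Fin (n + 1) → ℝ) : ℝ × ℝ → ℝ :=
  fun p => Finset.univ.inf' Finset.univ_nonempty (fun j => affFn (a j) (b j) (c j) p)

/-- The partition functional `J(𝒫)`. -/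
noncomputable def partFn {n k : ℕ} (a b c : Fin (n + 1) → ℝ) (μ ν : Measure ℝ)
    (P : MNPartition μ ν (k + 1)) : ℝ :=
  ∑ i : Fin (k + 1), Finset.univ.inf' Finset.univ_nonempty
    (fun j : Fin (n + 1) =>
      a j * ∫ x in P.I i, x ∂μ + b j * ∫ y in P.J i, y ∂ν + c j * (μ (P.I i)).toReal)

/-- The optimal Kantorovich value. -/
noncomputable def KVal (c : ℝ × ℝ → ℝ) (μ ν : Measure ℝ) : ℝ :=
  sInf {r : ℝ | ∃ π : Measure (ℝ × ℝ), IsCoupling π μ ν ∧ Integrable c π ∧ r = ∫ p, c p ∂π}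

section PushForward

variable {α β E : Type*} [MeasurableSpace α] [MeasurableSpace β] [NormedAddCommGroup E]

theorem MeasureTheory.Integrable.comp_of_map_eq {π : Measure α} {m : Measure β} {e : α → β}
    {f : β → E} (hf : Integrable f m) (he : Measurable e) (h : π.map e = m) :
    Integrable (fun p => f (e p)) π :=
  (h ▸ hf).comp_measurable he

theorem integral_comp_of_map_eq [NormedSpace ℝ E] {π : Measure α} {m : Measure β} {e : α → β}
    {f : β → E} (hf : AEStronglyMeasurable f m) (he : Measurable e) (h : π.map e = m) :
    ∫ p, f (e p) ∂π = ∫ x, f x ∂m := by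
  subst h
  exact (integral_map he.aemeasurable hf).symm

theorem MeasureTheory.Integrable.finset_inf' [Lattice E] [HasSolidNorm E] [IsOrderedAddMonoid E]
    {ι : Type*} {μ : Measure α} {s : Finset ι} (hs : s.Nonempty) {f : ι → α → E} (hf : ∀ i ∈ s, Integrable (f i) μ) :
    Integrable (fun x => s.inf' hs (f · x)) μ := by
  induction hs using Finset.Nonempty.cons_induction with
  | singleton i => simpa using hf i (mem_singleton_self i)
  | cons i t hi ht ih =>
    simp only [inf'_cons ht]
    exact (hf i (mem_cons_self i t)).inf (ih fun j hj => hf j (mem_cons_of_mem hj))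

end PushForward

section BlockCoupling

variable {α β ι : Type*} [MeasurableSpace α] [MeasurableSpace β] {μ : Measure α} {ν : Measure β}

noncomputable def blockProd (μ : Measure α) (ν : Measure β) (s : Set α) (t : Set β) :
    Measure (α × β) :=
  (ν t)⁻¹ • (μ.restrict s).prod (ν.restrict t)

theorem map_fst_blockProd [IsFiniteMeasure ν] {s : Set α} {t : Set β} (ht : ν t ≠ 0) :
    (blockProd μ ν s t).map Prod.fst = μ.restrict s := by
  rw [blockProd, Measure.map_smul, Measure.map_fst_prod, Measure.restrict_apply_univ, smul_smul,
    ENNReal.inv_mul_cancel ht (measure_ne_top ν t), one_smul]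

theorem map_snd_blockProd [IsFiniteMeasure ν] {s : Set α} {t : Set β} (hst : μ s = ν t)
    (ht : ν t ≠ 0) : (blockProd μ ν s t).map Prod.snd = ν.restrict t := by
  rw [blockProd, Measure.map_smul, Measure.map_snd_prod, Measure.restrict_apply_univ, hst,
    smul_smul, ENNReal.inv_mul_cancel ht (measure_ne_top ν t), one_smul]

theorem MeasureTheory.Measure.sum_restrict_of_iUnion_eq_univ [Fintype ι] {s : ι → Set α}
    (hd : Pairwise (Function.onFun Disjoint s)) (hm : ∀ i, MeasurableSet (s i))
    (hs : ⋃ i, s i = Set.univ) :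
    ∑ i, μ.restrict (s i) = μ := by
  rw [← Measure.sum_fintype, ← Measure.restrict_iUnion hd hm, hs, Measure.restrict_univ]

noncomputable def partitionCoupling [Fintype ι] (μ : Measure α) (ν : Measure β)
    (I : ι → Set α) (J : ι → Set β) : Measure (α × β) :=
  ∑ i, blockProd μ ν (I i) (J i)

end BlockCoupling

namespace MNPartition

variable {μ ν : Measure ℝ} {k : ℕ} (P : MNPartition μ ν k)

theorem measure_J_ne_zero (i : Fin k) : ν (P.J i) ≠ 0 :=
  P.h_eq i ▸ (P.h_pos i).ne'

theorem map_fst_partitionCoupling [IsFiniteMeasure ν] :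
    (partitionCoupling μ ν P.I P.J).map Prod.fst = μ := by
  rw [partitionCoupling, Measure.map_finset_sum' measurable_fst.aemeasurable]
  simp only [map_fst_blockProd (P.measure_J_ne_zero _)]
  exact Measure.sum_restrict_of_iUnion_eq_univ P.hI_disj P.hI_meas P.hI_cover

theorem map_snd_partitionCoupling [IsFiniteMeasure ν] :
    (partitionCoupling μ ν P.I P.J).map Prod.snd = ν := by
  rw [partitionCoupling, Measure.map_finset_sum' measurable_snd.aemeasurable]
  simp only [map_snd_blockProd (P.h_eq _) (P.measure_J_ne_zero _)]
  exact Measure.sum_restrict_of_iUnion_eq_univ P.hJ_disj P.hJ_meas P.hJ_cover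

theorem isCoupling_partitionCoupling [IsProbabilityMeasure μ] [IsFiniteMeasure ν] :
    IsCoupling (partitionCoupling μ ν P.I P.J) μ ν := by
  refine ⟨⟨?_⟩, P.map_fst_partitionCoupling, P.map_snd_partitionCoupling⟩
  rw [← Set.preimage_univ (f := Prod.fst), ← Measure.map_apply measurable_fst .univ,
    P.map_fst_partitionCoupling, measure_univ]

end MNPartition

section AffineCost

variable {π : Measure (ℝ × ℝ)} {m₁ m₂ : Measure ℝ} [IsFiniteMeasure m₁]

theorem integrable_affFn_of_map (h₁ : π.map Prod.fst = m₁) (h₂ : π.map Prod.snd = m₂)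
    (hm₁ : Integrable (fun x => x) m₁) (hm₂ : Integrable (fun y => y) m₂) (a b c : ℝ) :
    Integrable (affFn a b c) π := by
  have := (Measure.isFiniteMeasure_map_iff measurable_fst.aemeasurable (μ := π)).1 (h₁ ▸ ‹_›)
  exact (((hm₁.comp_of_map_eq measurable_fst h₁).const_mul a).add
    ((hm₂.comp_of_map_eq measurable_snd h₂).const_mul b)).add (integrable_const c)

theorem integral_affFn_of_map (h₁ : π.map Prod.fst = m₁) (h₂ : π.map Prod.snd = m₂)
    (hm₁ : Integrable (fun x => x) m₁) (hm₂ : Integrable (fun y => y) m₂) (a b c : ℝ) :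
    ∫ p, affFn a b c p ∂π = a * ∫ x, x ∂m₁ + b * ∫ y, y ∂m₂ + c * (m₁ Set.univ).toReal := by
  have := (Measure.isFiniteMeasure_map_iff measurable_fst.aemeasurable (μ := π)).1 (h₁ ▸ ‹_›)
  have i₁ := (hm₁.comp_of_map_eq measurable_fst h₁).const_mul a
  have i₂ := (hm₂.comp_of_map_eq measurable_snd h₂).const_mul b
  have i₁₂ : Integrable (fun p : ℝ × ℝ => a * p.1 + b * p.2) π := i₁.add i₂
  have hmass : π Set.univ = m₁ Set.univ := by
    rw [← h₁, Measure.map_apply measurable_fst .univ, Set.preimage_univ]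
  simp only [affFn]
  rw [integral_add i₁₂ (integrable_const c), integral_add i₁ i₂, integral_const_mul,
    integral_const_mul, integral_comp_of_map_eq hm₁.1 measurable_fst h₁,
    integral_comp_of_map_eq hm₂.1 measurable_snd h₂, integral_const, measureReal_def, hmass,
    smul_eq_mul, mul_comm c]

theorem integrable_minCost_of_map {n : ℕ} (h₁ : π.map Prod.fst = m₁) (h₂ : π.map Prod.snd = m₂)
    (hm₁ : Integrable (fun x => x) m₁) (hm₂ : Integrable (fun y => y) m₂)
    (a b c : Fin (n + 1) → ℝ) : Integrable (minCost a b c) π :=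
  Integrable.finset_inf' univ_nonempty fun _ _ => integrable_affFn_of_map h₁ h₂ hm₁ hm₂ _ _ _

theorem integral_minCost_le_of_map {n : ℕ} (h₁ : π.map Prod.fst = m₁)
    (h₂ : π.map Prod.snd = m₂) (hm₁ : Integrable (fun x => x) m₁)
    (hm₂ : Integrable (fun y => y) m₂) (a b c : Fin (n + 1) → ℝ) :
    ∫ p, minCost a b c p ∂π ≤ univ.inf' univ_nonempty fun j =>
      a j * ∫ x, x ∂m₁ + b j * ∫ y, y ∂m₂ + c j * (m₁ Set.univ).toReal := by
  refine le_inf' _ _ fun j _ => ?_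
  rw [← integral_affFn_of_map h₁ h₂ hm₁ hm₂]
  exact integral_mono (integrable_minCost_of_map h₁ h₂ hm₁ hm₂ a b c)
    (integrable_affFn_of_map h₁ h₂ hm₁ hm₂ _ _ _) fun p => inf'_le _ (mem_univ j)

end AffineCost

theorem neg_sum_abs_le_minCost {n : ℕ} (a b c : Fin (n + 1) → ℝ) (p : ℝ × ℝ) :
    -∑ j, (|a j| * |p.1| + |c j|) + -∑ j, |b j| * |p.2| ≤ minCost a b c p := by
  refine le_inf' _ _ fun j _ => ?_
  have hx : |a j| * |p.1| + |c j| ≤ ∑ j, (|a j| * |p.1| + |c j|) :=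
    single_le_sum (f := fun j => |a j| * |p.1| + |c j|) (fun _ _ => by positivity) (mem_univ j)
  have hy : |b j| * |p.2| ≤ ∑ j, |b j| * |p.2| :=
    single_le_sum (f := fun j => |b j| * |p.2|) (fun _ _ => by positivity) (mem_univ j)
  have ha := neg_abs_le (a j * p.1)
  have hb := neg_abs_le (b j * p.2)
  have hc := neg_abs_le (c j)
  rw [abs_mul] at ha hb
  simp only [affFn]
  linarith

theorem KVal_le_integral {cost : ℝ × ℝ → ℝ} {μ ν : Measure ℝ} {π : Measure (ℝ × ℝ)}
    (hπ : IsCoupling π μ ν) (hcost : Integrable cost π) {f g : ℝ → ℝ} (hf : Integrable f μ)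
    (hg : Integrable g ν) (hfg : ∀ p, f p.1 + g p.2 ≤ cost p) :
    KVal cost μ ν ≤ ∫ p, cost p ∂π := by
  refine csInf_le ⟨∫ x, f x ∂μ + ∫ y, g y ∂ν, ?_⟩ ⟨π, hπ, hcost, rfl⟩
  rintro _ ⟨π', ⟨-, h₁, h₂⟩, hcost', rfl⟩
  have if₁ := hf.comp_of_map_eq measurable_fst h₁
  have ig₂ := hg.comp_of_map_eq measurable_snd h₂
  calc ∫ x, f x ∂μ + ∫ y, g y ∂ν = ∫ p, f p.1 + g p.2 ∂π' := by
        rw [integral_add if₁ ig₂, integral_comp_of_map_eq hf.1 measurable_fst h₁,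
          integral_comp_of_map_eq hg.1 measurable_snd h₂]
    _ ≤ ∫ p, cost p ∂π' := integral_mono (if₁.add ig₂) hcost' hfg

theorem stmt8_general (n k : ℕ) (a b c : Fin (n + 1) → ℝ)
    (μ ν : Measure ℝ) [IsProbabilityMeasure μ] [IsProbabilityMeasure ν]
    (hμ : Integrable (fun x : ℝ => x) μ) (hν : Integrable (fun y : ℝ => y) ν)
    (P : MNPartition μ ν (k + 1)) :
    KVal (minCost a b c) μ ν ≤ partFn a b c μ ν P := by
  have hπ := P.isCoupling_partitionCoupling
  have h₁ (i) : (blockProd μ ν (P.I i) (P.J i)).map Prod.fst = μ.restrict (P.I i) :=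
    map_fst_blockProd (P.measure_J_ne_zero i)
  have h₂ (i) : (blockProd μ ν (P.I i) (P.J i)).map Prod.snd = ν.restrict (P.J i) :=
    map_snd_blockProd (P.h_eq i) (P.measure_J_ne_zero i)
  have hf : Integrable (fun x => -∑ j, (|a j| * |x| + |c j|)) μ :=
    (integrable_finsetSum _ fun _ _ => (hμ.abs.const_mul _).add (integrable_const _)).neg
  have hg : Integrable (fun y => -∑ j, |b j| * |y|) ν :=
    (integrable_finsetSum _ fun _ _ => hν.abs.const_mul _).neg
  calc KVal (minCost a b c) μ ν
      ≤ ∫ p, minCost a b c p ∂partitionCoupling μ ν P.I P.J :=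
        KVal_le_integral hπ (integrable_minCost_of_map hπ.2.1 hπ.2.2 hμ hν a b c) hf hg
          (neg_sum_abs_le_minCost a b c)
    _ = ∑ i, ∫ p, minCost a b c p ∂blockProd μ ν (P.I i) (P.J i) :=
        integral_finsetSum_measure fun i _ =>
          integrable_minCost_of_map (h₁ i) (h₂ i) hμ.integrableOn hν.integrableOn a b c
    _ ≤ partFn a b c μ ν P := sum_le_sum fun i _ => by
        simpa only [Measure.restrict_apply_univ] using
          integral_minCost_le_of_map (h₁ i) (h₂ i) hμ.integrableOn hν.integrableOn a b c

theorem stmt8 (n k : ℕ) (hk : k ≤ n) (a b c : Fin (n + 1) → ℝ)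
    (μ ν : Measure ℝ) [IsProbabilityMeasure μ] [IsProbabilityMeasure ν]
    [NullSingletonClass μ] [NullSingletonClass ν]
    (hμ : Integrable (fun x : ℝ => x) μ) (hν : Integrable (fun y : ℝ => y) ν)
    (P : MNPartition μ ν (k + 1)) :
    KVal (minCost a b c) μ ν ≤ partFn a b c μ ν P :=
  stmt8_general n k a b c μ ν hμ hν P
end

section
/- Let π be an optimal coupling for cost c = min(l₁,…,lₙ) (lᵢ affine, pairwise satisfying the non-degeneracy assumption, each set {c = lᵢ} having non-empty interior), and let ({I_i},{J_i}) be a (μ,ν)-partition such that π is concentrated on ⋃ᵢ I_i × J_i and c = lᵢ on I_i × J_i whenever π(I_i × J_i) > 0. Then J(𝒫) = ∫ c dπ = K(μ,ν), i.e., the partition functional attains the Kantorovich minimum. -/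
open MeasureTheory Finset

/-- Non-degeneracy assumption (A) for a pair of affine functions:
they are distinct and the line where they coincide is not parallel to an axis. -/
def AssumptionA (a₁ b₁ c₁ a₂ b₂ c₂ : ℝ) : Prop :=
  a₁ ≠ a₂ ∧ b₁ ≠ b₂

/-!
Since `π` is concentrated on the disjoint rectangles `I i ×ˢ J i`, `π`-a.e. point with first
coordinate in `I i` (resp. second coordinate in `J i`) lies in `I i ×ˢ J i`. The marginals of `π`
then give `π (I i ×ˢ J i) = μ (I i) > 0` and
`∫_{I i ×ˢ J i} lⱼ dπ = aⱼ ∫_{I i} x dμ + bⱼ ∫_{J i} y dν + cⱼ μ (I i)`.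
On each rectangle `c = min lⱼ` coincides with one `lⱼ`, and `c ≤ lⱼ'` everywhere, so the integral
of `c` over the rectangle is the minimum over `j` of these affine expressions; summing over the
rectangles gives `J(𝒫) = ∫ c dπ`, and optimality of `π` gives `∫ c dπ = K(μ,ν)`.
-/

open Filter Function

section Rectangles

variable {α β ι : Type*} [MeasurableSpace α] [MeasurableSpace β] {π : Measure (α × β)}
  {I : ι → Set α} {J : ι → Set β}

lemma fst_preimage_ae_eq_prod (hI : Pairwise (Disjoint on I))
    (hU : ∀ᵐ p ∂π, p ∈ ⋃ i, I i ×ˢ J i) (i : ι) :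
    Prod.fst ⁻¹' I i =ᵐ[π] I i ×ˢ J i := by
  refine eventuallyEq_set.mpr ?_
  filter_upwards [hU] with p hp
  obtain ⟨i', hpI, hpJ⟩ := Set.mem_iUnion.mp hp
  refine ⟨fun h => ⟨h, ?_⟩, And.left⟩
  obtain rfl : i' = i := by_contra fun hne => Set.disjoint_left.mp (hI hne) hpI h
  exact hpJ

lemma snd_preimage_ae_eq_prod (hJ : Pairwise (Disjoint on J))
    (hU : ∀ᵐ p ∂π, p ∈ ⋃ i, I i ×ˢ J i) (i : ι) :
    Prod.snd ⁻¹' J i =ᵐ[π] I i ×ˢ J i := by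
  refine eventuallyEq_set.mpr ?_
  filter_upwards [hU] with p hp
  obtain ⟨i', hpI, hpJ⟩ := Set.mem_iUnion.mp hp
  refine ⟨fun h => ⟨?_, h⟩, And.right⟩
  obtain rfl : i' = i := by_contra fun hne => Set.disjoint_left.mp (hJ hne) hpJ h
  exact hpI

lemma measure_prod_eq_map_fst (hI : Pairwise (Disjoint on I))
    (hU : ∀ᵐ p ∂π, p ∈ ⋃ i, I i ×ˢ J i) {i : ι} (hIi : MeasurableSet (I i)) :
    π (I i ×ˢ J i) = π.map Prod.fst (I i) := by
  rw [Measure.map_apply measurable_fst hIi, measure_congr (fst_preimage_ae_eq_prod hI hU i)]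

lemma setIntegral_prod_eq_setIntegral_map_fst {E : Type*} [NormedAddCommGroup E]
    [NormedSpace ℝ E] {f : α → E} (hf : AEStronglyMeasurable f (π.map Prod.fst))
    (hI : Pairwise (Disjoint on I)) (hU : ∀ᵐ p ∂π, p ∈ ⋃ i, I i ×ˢ J i) {i : ι}
    (hIi : MeasurableSet (I i)) :
    ∫ p in I i ×ˢ J i, f p.1 ∂π = ∫ x in I i, f x ∂π.map Prod.fst := by
  rw [setIntegral_map hIi hf measurable_fst.aemeasurable,
    setIntegral_congr_set (fst_preimage_ae_eq_prod hI hU i)]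

lemma setIntegral_prod_eq_setIntegral_map_snd {E : Type*} [NormedAddCommGroup E]
    [NormedSpace ℝ E] {f : β → E} (hf : AEStronglyMeasurable f (π.map Prod.snd))
    (hJ : Pairwise (Disjoint on J)) (hU : ∀ᵐ p ∂π, p ∈ ⋃ i, I i ×ˢ J i) {i : ι}
    (hJi : MeasurableSet (J i)) :
    ∫ p in I i ×ˢ J i, f p.2 ∂π = ∫ y in J i, f y ∂π.map Prod.snd := by
  rw [setIntegral_map hJi hf measurable_snd.aemeasurable,
    setIntegral_congr_set (snd_preimage_ae_eq_prod hJ hU i)]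

end Rectangles

lemma integral_eq_sum_setIntegral_of_ae_mem_iUnion {α ι : Type*} [MeasurableSpace α]
    [Fintype ι] {μ : Measure α} {s : ι → Set α} {f : α → ℝ}
    (hs : ∀ i, MeasurableSet (s i)) (hd : Pairwise (Disjoint on s))
    (hU : ∀ᵐ x ∂μ, x ∈ ⋃ i, s i) (hf : Integrable f μ) :
    ∫ x, f x ∂μ = ∑ i, ∫ x in s i, f x ∂μ := by
  rw [← integral_iUnion_fintype hs hd fun _ => hf.integrableOn]
  refine (setIntegral_eq_integral_of_ae_compl_eq_zero ?_).symm
  filter_upwards [hU] with x hx hx'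
  exact absurd hx hx'

lemma integral_inf'_eq_inf'_integral {α ι : Type*} [MeasurableSpace α] {μ : Measure α}
    {t : Finset ι} (ht : t.Nonempty) {f : ι → α → ℝ} (hf : ∀ j ∈ t, Integrable (f j) μ)
    {j₀ : ι} (hj₀ : j₀ ∈ t) (h : ∀ᵐ x ∂μ, t.inf' ht (fun j => f j x) = f j₀ x) :
    ∫ x, t.inf' ht (fun j => f j x) ∂μ = t.inf' ht (fun j => ∫ x, f j x ∂μ) := by
  have hg : ∫ x, t.inf' ht (fun j => f j x) ∂μ = ∫ x, f j₀ x ∂μ := integral_congr_ae h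
  have hgi : Integrable (fun x => t.inf' ht (fun j => f j x)) μ :=
    (hf j₀ hj₀).congr (h.mono fun _ hx => hx.symm)
  refine hg ▸ le_antisymm (Finset.le_inf' _ _ fun j hj => ?_) (Finset.inf'_le _ hj₀)
  exact hg ▸ integral_mono_ae hgi (hf j hj) (ae_of_all _ fun x => Finset.inf'_le _ hj)

lemma integrable_affFn {m : Measure (ℝ × ℝ)} [IsFiniteMeasure m]
    (hx : Integrable (fun p => p.1) m) (hy : Integrable (fun p => p.2) m) (a b c : ℝ) :
    Integrable (affFn a b c) m :=
  ((hx.const_mul a).add (hy.const_mul b)).add (integrable_const c)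

lemma integral_affFn {m : Measure (ℝ × ℝ)} [IsFiniteMeasure m]
    (hx : Integrable (fun p => p.1) m) (hy : Integrable (fun p => p.2) m) (a b c : ℝ) :
    ∫ p, affFn a b c p ∂m = a * ∫ p, p.1 ∂m + b * ∫ p, p.2 ∂m + c * m.real Set.univ := by
  unfold affFn
  rw [integral_add (f := fun p : ℝ × ℝ => a * p.1 + b * p.2)
      ((hx.const_mul a).add (hy.const_mul b)) (integrable_const c),
    integral_add (f := fun p : ℝ × ℝ => a * p.1) (hx.const_mul a) (hy.const_mul b),
    integral_const_mul, integral_const_mul, integral_const, smul_eq_mul, mul_comm c]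

lemma KVal_eq_integral_of_forall_le {μ ν : Measure ℝ} {π : Measure (ℝ × ℝ)} {c : ℝ × ℝ → ℝ}
    (hπ : IsCoupling π μ ν) (hc : Integrable c π)
    (hopt : ∀ ρ : Measure (ℝ × ℝ), IsCoupling ρ μ ν → Integrable c ρ →
      ∫ p, c p ∂π ≤ ∫ p, c p ∂ρ) :
    KVal c μ ν = ∫ p, c p ∂π := by
  refine IsLeast.csInf_eq ⟨⟨π, hπ, hc, rfl⟩, ?_⟩
  rintro r ⟨ρ, hρ, hρc, rfl⟩
  exact hopt ρ hρ hρc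

namespace MNPartition

variable {μ ν : Measure ℝ} {k : ℕ} (P : MNPartition μ ν k)

lemma pairwise_disjoint_prod : Pairwise (Disjoint on fun i => P.I i ×ˢ P.J i) :=
  fun _ _ hij => Set.disjoint_prod.mpr (Or.inl (P.hI_disj hij))

lemma setIntegral_affFn {π : Measure (ℝ × ℝ)} [IsFiniteMeasure π]
    (hπ₁ : π.map Prod.fst = μ) (hπ₂ : π.map Prod.snd = ν)
    (hU : ∀ᵐ p ∂π, p ∈ ⋃ i, P.I i ×ˢ P.J i)
    (hx : Integrable (fun p => p.1) π) (hy : Integrable (fun p => p.2) π) (i : Fin k)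
    (a b c : ℝ) :
    ∫ p in P.I i ×ˢ P.J i, affFn a b c p ∂π =
      a * ∫ x in P.I i, x ∂μ + b * ∫ y in P.J i, y ∂ν + c * (μ (P.I i)).toReal := by
  subst hπ₁ hπ₂
  rw [integral_affFn hx.restrict hy.restrict, measureReal_restrict_apply_univ,
    measureReal_def, measure_prod_eq_map_fst P.hI_disj hU (P.hI_meas i),
    setIntegral_prod_eq_setIntegral_map_fst (f := fun x => x) aestronglyMeasurable_id
      P.hI_disj hU (P.hI_meas i),
    setIntegral_prod_eq_setIntegral_map_snd (f := fun y => y) aestronglyMeasurable_id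
      P.hJ_disj hU (P.hJ_meas i)]

end MNPartition

theorem stmt9_general (n k : ℕ) (a b c : Fin (n + 1) → ℝ)
    (μ ν : Measure ℝ)
    (hμ : Integrable (fun x : ℝ => x) μ) (hν : Integrable (fun y : ℝ => y) ν)
    (π : Measure (ℝ × ℝ)) (hπ : IsCoupling π μ ν)
    (hci : Integrable (minCost a b c) π)
    (hopt : ∀ ρ : Measure (ℝ × ℝ), IsCoupling ρ μ ν → Integrable (minCost a b c) ρ →
      ∫ p, minCost a b c p ∂π ≤ ∫ p, minCost a b c p ∂ρ)
    (P : MNPartition μ ν (k + 1))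
    (hconc : π (⋃ i, P.I i ×ˢ P.J i) = 1)
    (hcl : ∀ i : Fin (k + 1), 0 < π (P.I i ×ˢ P.J i) →
      ∃ j : Fin (n + 1), ∀ p ∈ P.I i ×ˢ P.J i, minCost a b c p = affFn (a j) (b j) (c j) p) :
    partFn a b c μ ν P = ∫ p, minCost a b c p ∂π ∧
      ∫ p, minCost a b c p ∂π = KVal (minCost a b c) μ ν := by
  obtain ⟨hπp, hπ₁, hπ₂⟩ := hπ
  have hrect : ∀ i, MeasurableSet (P.I i ×ˢ P.J i) := fun i => (P.hI_meas i).prod (P.hJ_meas i)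
  have hU : ∀ᵐ p ∂π, p ∈ ⋃ i, P.I i ×ˢ P.J i :=
    (mem_ae_iff_prob_eq_one (MeasurableSet.iUnion hrect)).mpr hconc
  have hx : Integrable (fun p : ℝ × ℝ => p.1) π := (hπ₁ ▸ hμ).comp_measurable measurable_fst
  have hy : Integrable (fun p : ℝ × ℝ => p.2) π := (hπ₂ ▸ hν).comp_measurable measurable_snd
  refine ⟨?_, (KVal_eq_integral_of_forall_le ⟨hπp, hπ₁, hπ₂⟩ hci hopt).symm⟩
  rw [integral_eq_sum_setIntegral_of_ae_mem_iUnion hrect P.pairwise_disjoint_prod hU hci, partFn]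
  refine Finset.sum_congr rfl fun i _ => ?_
  have hpos : 0 < π (P.I i ×ˢ P.J i) := by
    rw [measure_prod_eq_map_fst P.hI_disj hU (P.hI_meas i), hπ₁]
    exact P.h_pos i
  obtain ⟨j, hj⟩ := hcl i hpos
  calc _ = univ.inf' univ_nonempty
          fun j => ∫ p in P.I i ×ˢ P.J i, affFn (a j) (b j) (c j) p ∂π := by
        simp only [P.setIntegral_affFn hπ₁ hπ₂ hU hx hy]
    _ = _ := (integral_inf'_eq_inf'_integral univ_nonempty
        (fun j _ => integrable_affFn hx.restrict hy.restrict _ _ _) (mem_univ j)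
        ((ae_restrict_iff' (hrect i)).mpr (ae_of_all _ hj))).symm

theorem stmt9 (n k : ℕ) (a b c : Fin (n + 1) → ℝ)
    (hA : ∀ i j : Fin (n + 1), i ≠ j → AssumptionA (a i) (b i) (c i) (a j) (b j) (c j))
    (hint : ∀ j : Fin (n + 1),
      (interior {p : ℝ × ℝ | minCost a b c p = affFn (a j) (b j) (c j) p}).Nonempty)
    (μ ν : Measure ℝ) [IsProbabilityMeasure μ] [IsProbabilityMeasure ν]
    [NullSingletonClass μ] [NullSingletonClass ν]
    (hμ : Integrable (fun x : ℝ => x) μ) (hν : Integrable (fun y : ℝ => y) ν)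
    (π : Measure (ℝ × ℝ)) (hπ : IsCoupling π μ ν)
    (hci : Integrable (minCost a b c) π)
    (hopt : ∀ ρ : Measure (ℝ × ℝ), IsCoupling ρ μ ν → Integrable (minCost a b c) ρ →
      ∫ p, minCost a b c p ∂π ≤ ∫ p, minCost a b c p ∂ρ)
    (P : MNPartition μ ν (k + 1))
    (hconc : π (⋃ i, P.I i ×ˢ P.J i) = 1)
    (hcl : ∀ i : Fin (k + 1), 0 < π (P.I i ×ˢ P.J i) →
      ∃ j : Fin (n + 1), ∀ p ∈ P.I i ×ˢ P.J i, minCost a b c p = affFn (a j) (b j) (c j) p) :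
    partFn a b c μ ν P = ∫ p, minCost a b c p ∂π ∧
      ∫ p, minCost a b c p ∂π = KVal (minCost a b c) μ ν :=
  stmt9_general n k a b c μ ν hμ hν π hπ hci hopt P hconc hcl
end

section
/- Let b > 0 and c(x,y) = min(x, b·y). Suppose μ, ν are atomless probability measures on ℝ with compact support, and let s satisfy μ((-∞,s)) = ν((s/b,+∞)). Then any coupling π ∈ Π(μ,ν) supported in Q = {x ≤ s, y ≥ s/b} ∪ {x ≥ s, y ≤ s/b} is optimal for c, and ∫ c dπ = ∫_{(-∞,s]} x dμ + b ∫_{(-∞,s/b]} y dν. -/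
/-!
Kantorovich duality with explicit potentials: `φ x = min x s` and `ψ y = min (b * y) s - s`
satisfy `φ x + ψ y ≤ min x (b * y)` everywhere, with equality exactly on `Q`. Hence every coupling
costs at least `∫ φ dμ + ∫ ψ dν`, and a coupling concentrated on `Q` attains it. The balance
`μ (Iio s) = ν (Ioi (s / b))` makes the constant `s` cancel in the dual value, which is then the
stated sum of truncated first moments.
-/

open MeasureTheory Set

lemma min_add_min_sub_le_min (a c s : ℝ) : min a s + min c s - s ≤ min a c :=
  le_min (by linarith [min_le_left a s, min_le_right c s])
    (by linarith [min_le_right a s, min_le_left c s])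

lemma min_add_min_sub_eq_min {a c s : ℝ} (h : a ≤ s ∧ s ≤ c ∨ c ≤ s ∧ s ≤ a) :
    min a s + min c s - s = min a c := by
  rcases h with ⟨ha, hc⟩ | ⟨hc, ha⟩
  · rw [min_eq_left ha, min_eq_right hc, min_eq_left (ha.trans hc)]; ring
  · rw [min_eq_right ha, min_eq_left hc, min_eq_right (hc.trans ha)]; ring

lemma integrable_of_measure_compl_eq_zero {X E : Type*} [TopologicalSpace X] [T2Space X]
    [MeasurableSpace X] [OpensMeasurableSpace X] [NormedAddCommGroup E] {μ : Measure X}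
    [IsFiniteMeasureOnCompacts μ] {K : Set X} (hK : IsCompact K) (hKμ : μ Kᶜ = 0) {f : X → E}
    (hf : ContinuousOn f K) : Integrable f μ := by
  rw [← Measure.restrict_eq_self_of_ae_mem (ae_iff.2 hKμ)]
  exact hf.integrableOn_compact hK

lemma integral_min_mul_const {μ : Measure ℝ} [IsFiniteMeasure μ] (hμ : Integrable (fun x ↦ x) μ)
    {b : ℝ} (hb : 0 < b) (s : ℝ) :
    ∫ x, min (b * x) s ∂μ = b * (∫ x in Iic (s / b), x ∂μ) + μ.real (Ioi (s / b)) * s := by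
  have hint : Integrable (fun x ↦ min (b * x) s) μ := (hμ.const_mul b).inf (integrable_const s)
  rw [← integral_add_compl measurableSet_Iic hint, compl_Iic, ← integral_const_mul,
    setIntegral_congr_fun measurableSet_Iic
      fun x hx ↦ min_eq_left (by rw [mul_comm]; exact (le_div_iff₀ hb).mp hx),
    setIntegral_congr_fun measurableSet_Ioi
      fun x hx ↦ min_eq_right (by rw [mul_comm]; exact (div_le_iff₀ hb).mp (le_of_lt hx)),
    setIntegral_const, smul_eq_mul]

lemma integral_min_add_integral_min_mul_sub {μ ν : Measure ℝ} [IsFiniteMeasure μ]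
    [IsProbabilityMeasure ν] (hμ : Integrable (fun x ↦ x) μ) (hν : Integrable (fun y ↦ y) ν)
    {b s : ℝ} (hb : 0 < b) (hmass : μ.real (Ioi s) + ν.real (Ioi (s / b)) = 1) :
    ∫ x, min x s ∂μ + ∫ y, min (b * y) s - s ∂ν =
      (∫ x in Iic s, x ∂μ) + b * ∫ y in Iic (s / b), y ∂ν := by
  have hμmin := integral_min_mul_const hμ one_pos s
  simp only [one_mul, div_one] at hμmin
  have hνmin : Integrable (fun y ↦ min (b * y) s) ν := (hν.const_mul b).inf (integrable_const s)
  rw [integral_sub hνmin (integrable_const s), integral_min_mul_const hν hb, hμmin,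
    integral_const, probReal_univ, one_smul]
  linear_combination s * hmass

lemma measureReal_Ioi_add_measureReal_Iio {μ : Measure ℝ} [IsProbabilityMeasure μ]
    [NullSingletonClass μ] (s : ℝ) : μ.real (Ioi s) + μ.real (Iio s) = 1 := by
  rw [measureReal_congr Iio_ae_eq_Iic, ← compl_Iic, add_comm,
    measureReal_add_measureReal_compl measurableSet_Iic, probReal_univ]

lemma ae_mem_of_msupport_subset {π : Measure (ℝ × ℝ)} {Q : Set (ℝ × ℝ)}
    (hQ : msupport π ⊆ Q) : ∀ᵐ p ∂π, p ∈ Q := by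
  refine ae_iff.2 (measure_null_of_locally_null _ fun p hp ↦ ?_)
  have : p ∉ msupport π := fun h ↦ hp (hQ h)
  simp only [msupport, mem_ofPred_eq, not_forall, not_lt, nonpos_iff_eq_zero] at this
  obtain ⟨U, hU, hpU, hU0⟩ := this
  exact ⟨U, mem_nhdsWithin_of_mem_nhds (hU.mem_nhds hpU), hU0⟩

namespace IsCoupling

variable {π : Measure (ℝ × ℝ)} {μ ν : Measure ℝ}

lemma integrable_comp_fst (hπ : IsCoupling π μ ν) {f : ℝ → ℝ} (hf : Integrable f μ) :
    Integrable (fun p ↦ f p.1) π :=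
  (hπ.2.1 ▸ hf).comp_measurable measurable_fst

lemma integrable_comp_snd (hπ : IsCoupling π μ ν) {f : ℝ → ℝ} (hf : Integrable f ν) :
    Integrable (fun p ↦ f p.2) π :=
  (hπ.2.2 ▸ hf).comp_measurable measurable_snd

lemma integral_comp_fst (hπ : IsCoupling π μ ν) {f : ℝ → ℝ} (hf : AEStronglyMeasurable f μ) :
    ∫ p, f p.1 ∂π = ∫ x, f x ∂μ := by
  rw [← hπ.2.1] at hf ⊢
  exact (integral_map measurable_fst.aemeasurable hf).symm

lemma integral_comp_snd (hπ : IsCoupling π μ ν) {f : ℝ → ℝ} (hf : AEStronglyMeasurable f ν) :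
    ∫ p, f p.2 ∂π = ∫ y, f y ∂ν := by
  rw [← hπ.2.2] at hf ⊢
  exact (integral_map measurable_snd.aemeasurable hf).symm

lemma integral_add_comp (hπ : IsCoupling π μ ν) {φ ψ : ℝ → ℝ} (hφ : Integrable φ μ)
    (hψ : Integrable ψ ν) :
    ∫ p, φ p.1 + ψ p.2 ∂π = ∫ x, φ x ∂μ + ∫ y, ψ y ∂ν := by
  rw [integral_add (hπ.integrable_comp_fst hφ) (hπ.integrable_comp_snd hψ),
    hπ.integral_comp_fst hφ.1, hπ.integral_comp_snd hψ.1]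

lemma integral_add_le_integral (hπ : IsCoupling π μ ν) {φ ψ : ℝ → ℝ} (hφ : Integrable φ μ)
    (hψ : Integrable ψ ν) {c : ℝ × ℝ → ℝ} (hc : Integrable c π)
    (hle : ∀ p, φ p.1 + ψ p.2 ≤ c p) :
    ∫ x, φ x ∂μ + ∫ y, ψ y ∂ν ≤ ∫ p, c p ∂π :=
  hπ.integral_add_comp hφ hψ ▸
    integral_mono ((hπ.integrable_comp_fst hφ).add (hπ.integrable_comp_snd hψ)) hc hle

lemma integral_eq_integral_add (hπ : IsCoupling π μ ν) {φ ψ : ℝ → ℝ} (hφ : Integrable φ μ)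
    (hψ : Integrable ψ ν) {c : ℝ × ℝ → ℝ} (heq : ∀ᵐ p ∂π, c p = φ p.1 + ψ p.2) :
    ∫ p, c p ∂π = ∫ x, φ x ∂μ + ∫ y, ψ y ∂ν := by
  rw [integral_congr_ae heq, hπ.integral_add_comp hφ hψ]

end IsCoupling

theorem stmt16_general (μ ν : Measure ℝ) [IsProbabilityMeasure μ] [IsProbabilityMeasure ν]
    [NullSingletonClass μ]
    (hμc : ∃ K : Set ℝ, IsCompact K ∧ μ Kᶜ = 0)
    (hνc : ∃ K : Set ℝ, IsCompact K ∧ ν Kᶜ = 0)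
    (b : ℝ) (hb : 0 < b)
    (s : ℝ) (hs : μ (Set.Iio s) = ν (Set.Ioi (s / b)))
    (π : Measure (ℝ × ℝ)) (hπ : IsCoupling π μ ν)
    (hsupp : msupport π ⊆
      {p : ℝ × ℝ | p.1 ≤ s ∧ s / b ≤ p.2} ∪ {p : ℝ × ℝ | s ≤ p.1 ∧ p.2 ≤ s / b}) :
    (∀ ρ : Measure (ℝ × ℝ), IsCoupling ρ μ ν →
        ∫ p : ℝ × ℝ, min p.1 (b * p.2) ∂π ≤ ∫ p : ℝ × ℝ, min p.1 (b * p.2) ∂ρ) ∧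
      ∫ p : ℝ × ℝ, min p.1 (b * p.2) ∂π =
        (∫ x in Set.Iic s, x ∂μ) + b * ∫ y in Set.Iic (s / b), y ∂ν := by
  obtain ⟨K, hK, hKμ⟩ := hμc
  obtain ⟨K', hK', hK'ν⟩ := hνc
  have hμ : Integrable (fun x ↦ x) μ := integrable_of_measure_compl_eq_zero hK hKμ continuousOn_id
  have hν : Integrable (fun y ↦ y) ν :=
    integrable_of_measure_compl_eq_zero hK' hK'ν continuousOn_id
  have hφ : Integrable (fun x ↦ min x s) μ := hμ.inf (integrable_const s)
  have hψ : Integrable (fun y ↦ min (b * y) s - s) ν :=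
    ((hν.const_mul b).inf (integrable_const s)).sub (integrable_const s)
  have hbalance : μ.real (Ioi s) + ν.real (Ioi (s / b)) = 1 := by
    simpa only [measureReal_def, hs] using measureReal_Ioi_add_measureReal_Iio (μ := μ) s
  have hcost : ∀ ρ, IsCoupling ρ μ ν → Integrable (fun p : ℝ × ℝ ↦ min p.1 (b * p.2)) ρ :=
    fun ρ hρ ↦ (hρ.integrable_comp_fst hμ).inf (hρ.integrable_comp_snd (hν.const_mul b))
  have hπeq : ∀ᵐ p ∂π, min p.1 (b * p.2) = min p.1 s + (min (b * p.2) s - s) := by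
    filter_upwards [ae_mem_of_msupport_subset hsupp] with p hp
    rw [← add_sub_assoc, min_add_min_sub_eq_min]
    rcases hp with ⟨h1, h2⟩ | ⟨h1, h2⟩
    · exact .inl ⟨h1, by rwa [mul_comm, ← div_le_iff₀ hb]⟩
    · exact .inr ⟨by rwa [mul_comm, ← le_div_iff₀ hb], h1⟩
  have hπval := hπ.integral_eq_integral_add hφ hψ hπeq
  refine ⟨fun ρ hρ ↦ hπval ▸ hρ.integral_add_le_integral hφ hψ (hcost ρ hρ) fun p ↦ ?_,
    hπval.trans (integral_min_add_integral_min_mul_sub hμ hν hb hbalance)⟩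
  rw [← add_sub_assoc]
  exact min_add_min_sub_le_min _ _ _

theorem stmt16 (μ ν : Measure ℝ) [IsProbabilityMeasure μ] [IsProbabilityMeasure ν]
    [NullSingletonClass μ] [NullSingletonClass ν]
    (hμc : ∃ K : Set ℝ, IsCompact K ∧ μ Kᶜ = 0)
    (hνc : ∃ K : Set ℝ, IsCompact K ∧ ν Kᶜ = 0)
    (b : ℝ) (hb : 0 < b)
    (s : ℝ) (hs : μ (Set.Iio s) = ν (Set.Ioi (s / b)))
    (π : Measure (ℝ × ℝ)) (hπ : IsCoupling π μ ν)
    (hsupp : msupport π ⊆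
      {p : ℝ × ℝ | p.1 ≤ s ∧ s / b ≤ p.2} ∪ {p : ℝ × ℝ | s ≤ p.1 ∧ p.2 ≤ s / b}) :
    (∀ ρ : Measure (ℝ × ℝ), IsCoupling ρ μ ν →
        ∫ p : ℝ × ℝ, min p.1 (b * p.2) ∂π ≤ ∫ p : ℝ × ℝ, min p.1 (b * p.2) ∂ρ) ∧
      ∫ p : ℝ × ℝ, min p.1 (b * p.2) ∂π =
        (∫ x in Set.Iic s, x ∂μ) + b * ∫ y in Set.Iic (s / b), y ∂ν :=
  stmt16_general μ ν hμc hνc b hb s hs π hπ hsupp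
end
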